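/- (Hopf trace formula) Let k be a field, X a bounded cochain complex of finite-dimensional k-vector spaces, and f : X → X a chain map. Then Σ_i (−1)^i tr(f^i : X^i → X^i) = Σ_i (−1)^i tr(H^i(f) : H^i(X) → H^i(X)). -/

import Mathlib

open LinearMap

section TraceLemmas

variable {K : Type} [Field K]

/-- trace via equivariant linear equivalence -/
lemma trace_eq_of_equiv {V W : Type*} [AddCommGroup V] [Module K V]
    [AddCommGroup W] [Module K W]
    (e : V ≃ₗ[K] W) (φ : V →ₗ[K] V) (ψ : W →ₗ[K] W)
    (h : ∀ x, e (φ x) = ψ (e x)) :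
    trace K V φ = trace K W ψ := by
  have : ψ = e.conj φ := by
    ext w
    simp [LinearEquiv.conj_apply, h (e.symm w)]
  rw [this, LinearMap.trace_conj']

lemma trace_prod_decomp {A B : Type*} [AddCommGroup A] [Module K A]
    [AddCommGroup B] [Module K B] [FiniteDimensional K A] [FiniteDimensional K B]
    (ψ : A × B →ₗ[K] A × B) :
    trace K _ ψ = trace K A (fst K A B ∘ₗ ψ ∘ₗ inl K A B)
      + trace K B (snd K A B ∘ₗ ψ ∘ₗ inr K A B) := by
  have hψ : ψ = (inl K A B ∘ₗ (fst K A B ∘ₗ ψ)) + (inr K A B ∘ₗ (snd K A B ∘ₗ ψ)) := by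
    ext x <;> simp
  nth_rewrite 1 [hψ]
  rw [map_add,
    LinearMap.trace_comp_comm' (fst K A B ∘ₗ ψ) (inl K A B),
    LinearMap.trace_comp_comm' (snd K A B ∘ₗ ψ) (inr K A B),
    LinearMap.comp_assoc, LinearMap.comp_assoc]

/-- Trace additivity along an invariant submodule. -/
lemma trace_eq_restrict_add_mapQ {V : Type*} [AddCommGroup V] [Module K V]
    [FiniteDimensional K V] (p : Submodule K V) (φ : V →ₗ[K] V)
    (hp : p ≤ p.comap φ) :
    trace K V φ = trace K p (φ.restrict (fun x hx => hp hx))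
      + trace K (V ⧸ p) (p.mapQ p φ hp) := by
  obtain ⟨q, hq⟩ := Submodule.exists_isCompl p
  let e : (p × q) ≃ₗ[K] V := Submodule.prodEquivOfIsCompl p q hq
  have h1 : trace K V φ = trace K _ (e.symm.conj φ) := (LinearMap.trace_conj' _ _).symm
  rw [h1, trace_prod_decomp]
  have key : ∀ z : V, (e.symm z).1 = Submodule.linearProjOfIsCompl p q hq z :=
    fun z => rfl
  have decompose : ∀ z : V, ((e.symm z).1 : V) + ((e.symm z).2 : V) = z := by
    intro z
    have := e.apply_symm_apply z
    rwa [Submodule.coe_prodEquivOfIsCompl'] at this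
  congr 1
  · apply trace_eq_of_equiv (LinearEquiv.refl K p)
    intro x
    simp only [LinearEquiv.refl_apply, LinearEquiv.conj_apply, coe_comp,
      LinearEquiv.coe_coe, Function.comp_apply]
    rw [LinearEquiv.symm_symm]
    have h1 : e (inl K p q x) = (x : V) := by
      simp [e, Submodule.coe_prodEquivOfIsCompl']
    rw [h1]
    have h2 : (e.symm (φ x)).1 = ⟨φ x, hp x.2⟩ := by
      rw [key]
      exact Submodule.linearProjOfIsCompl_apply_left hq ⟨φ x, hp x.2⟩
    show (e.symm (φ x)).1 = _
    rw [h2]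
    rfl
  · apply trace_eq_of_equiv ((Submodule.quotientEquivOfIsCompl p q hq).symm)
    intro x
    simp only [LinearEquiv.conj_apply, coe_comp, LinearEquiv.coe_coe, Function.comp_apply]
    rw [LinearEquiv.symm_symm]
    have h1 : e (inr K p q x) = (x : V) := by
      simp [e, Submodule.coe_prodEquivOfIsCompl']
    rw [h1]
    rw [Submodule.quotientEquivOfIsCompl_symm_apply,
      Submodule.quotientEquivOfIsCompl_symm_apply]
    show (Submodule.Quotient.mk (((e.symm (φ x)).2 : V)) : V ⧸ p)
      = Submodule.mapQ p p φ hp (Submodule.Quotient.mk (x : V))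
    rw [Submodule.mapQ_apply]
    rw [Submodule.Quotient.eq]
    have h3 : ((e.symm (φ x)).2 : V) - φ (x : V) = -((e.symm (φ x)).1 : V) := by
      rw [show -((e.symm (φ (x : V))).1 : V) = ((e.symm (φ (x : V))).2 : V)
        - (((e.symm (φ (x : V))).1 : V) + ((e.symm (φ (x : V))).2 : V)) by abel,
        decompose]
    rw [h3]
    exact neg_mem (Submodule.coe_mem _)

end TraceLemmas

section Bridge

open CategoryTheory Limits HomologicalComplex

variable {k : Type} [Field k] (X : CochainComplex (ModuleCat.{v} k) ℤ)
  [hfd : ∀ i : ℤ, FiniteDimensional k (X.X i)] (f : X ⟶ X) (i : ℤ)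

lemma hom_congr {M N : ModuleCat.{v} k} {a b : M ⟶ N} (h : a = b) (x : M) :
    a.hom x = b.hom x := by rw [h]

/-- the explicit short complex around degree `i` -/
noncomputable abbrev Scplx : ShortComplex (ModuleCat k) := X.sc' (i-1) i (i+1)

/-- cycles -/
noncomputable abbrev Zsub : Submodule k (X.X i) := LinearMap.ker (Scplx X i).g.hom

lemma Zsub_eq : Zsub X i = LinearMap.ker (X.d i (i+1)).hom := rfl

lemma f_mem_Zsub : ∀ x ∈ Zsub X i, (f.f i).hom x ∈ Zsub X i := by
  intro x hx
  simp only [Zsub_eq, LinearMap.mem_ker] at hx ⊢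
  have h2 : (X.d i (i+1)).hom ((f.f i).hom x) = (f.f (i+1)).hom ((X.d i (i+1)).hom x) :=
    hom_congr (f.comm i (i+1)) x
  rw [h2, hx, map_zero]

/-- restriction of `f.f i` to cycles -/
noncomputable def rmap : Zsub X i →ₗ[k] Zsub X i :=
  (f.f i).hom.restrict (f_mem_Zsub X f i)

/-- boundaries inside cycles -/
noncomputable abbrev Nsub : Submodule k (Zsub X i) :=
  LinearMap.range (Scplx X i).moduleCatToCycles

lemma rmap_N : Nsub X i ≤ (Nsub X i).comap (rmap X f i) := by
  rintro z ⟨x, rfl⟩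
  refine ⟨(f.f (i-1)).hom x, ?_⟩
  apply Subtype.ext
  exact hom_congr (f.comm (i-1) i) x

/-- the concrete induced map on homology -/
noncomputable def hmap : (Zsub X i ⧸ Nsub X i) →ₗ[k] (Zsub X i ⧸ Nsub X i) :=
  Submodule.mapQ _ _ (rmap X f i) (rmap_N X f i)

/-- the left homology map data for `f` around degree `i` -/
noncomputable def lhmd : ShortComplex.LeftHomologyMapData
    ((shortComplexFunctor' (ModuleCat k) (ComplexShape.up ℤ) (i-1) i (i+1)).map f)
    (Scplx X i).moduleCatLeftHomologyData (Scplx X i).moduleCatLeftHomologyData where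
  φK := ModuleCat.ofHom (rmap X f i)
  φH := ModuleCat.ofHom (hmap X f i)
  commi := rfl
  commf' := by
    ext x
    apply Subtype.ext
    exact (hom_congr (f.comm (i-1) i) x).symm
  commπ := rfl

universe v

lemma trace_conj_iso {M N : ModuleCat.{v} k} (u : M ≅ N) (m : N ⟶ N) :
    LinearMap.trace k M (u.hom ≫ m ≫ u.inv).hom = LinearMap.trace k N m.hom := by
  refine trace_eq_of_equiv (K := k) (V := (M : Type v)) (W := (N : Type v)) u.toLinearEquiv (u.hom ≫ m ≫ u.inv).hom m.hom ?_
  intro x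
  show u.hom.hom (u.inv.hom (m.hom (u.hom.hom x))) = m.hom (u.toLinearEquiv x)
  have : u.inv ≫ u.hom = 𝟙 N := u.inv_hom_id
  have h2 := hom_congr this (m.hom (u.hom.hom x))
  exact h2

lemma bridge : LinearMap.trace k (X.homology i) (homologyMap f i).hom
    = LinearMap.trace k _ (hmap X f i) := by
  have hprev : (ComplexShape.up ℤ).prev i = i - 1 := CochainComplex.prev ℤ i
  have hnext : (ComplexShape.up ℤ).next i = i + 1 := CochainComplex.next ℤ i
  set F := shortComplexFunctor (ModuleCat k) (ComplexShape.up ℤ) i with hF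
  set F' := shortComplexFunctor' (ModuleCat k) (ComplexShape.up ℤ) (i-1) i (i+1) with hF'
  set e := natIsoSc' (ModuleCat k) (ComplexShape.up ℤ) (i-1) i (i+1) hprev hnext with he
  have hnat : F.map f = e.hom.app X ≫ F'.map f ≫ e.inv.app X := by
    have h := e.hom.naturality f
    rw [← Category.assoc, ← h]
    simp
    rfl
  set hdata := (Scplx X i).moduleCatLeftHomologyData with hhdata
  have hmain := (lhmd X f i).homologyMap_eq
  set U : X.homology i ≅ hdata.H :=
    ShortComplex.homologyMapIso (e.app X) ≪≫ hdata.homologyIso with hU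
  have key : homologyMap f i = U.hom ≫ ModuleCat.ofHom (hmap X f i) ≫ U.inv := by
    show ShortComplex.homologyMap (F.map f) = _
    rw [hnat, ShortComplex.homologyMap_comp, ShortComplex.homologyMap_comp, hmain]
    simp only [hU, Iso.trans_hom, Iso.trans_inv, Category.assoc]
    rfl
  rw [key]
  exact trace_conj_iso U (ModuleCat.ofHom (hmap X f i))


lemma f_mem_range (j l : ℤ) : ∀ x ∈ LinearMap.range (X.d j l).hom,
    (f.f l).hom x ∈ LinearMap.range (X.d j l).hom := by
  rintro x ⟨y, rfl⟩
  exact ⟨(f.f j).hom y, hom_congr (f.comm j l) y⟩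

/-- restriction of `f` to boundaries -/
noncomputable def bmap (j l : ℤ) :
    LinearMap.range (X.d j l).hom →ₗ[k] LinearMap.range (X.d j l).hom :=
  (f.f l).hom.restrict (f_mem_range X f j l)

lemma bmap_congr (j j' l : ℤ) (h : j = j') :
    LinearMap.trace k _ (bmap X f j l) = LinearMap.trace k _ (bmap X f j' l) := by
  subst h; rfl

/-- step 1: trace of `f.f i` splits into cycles and co-cycles parts -/
lemma step1 : LinearMap.trace k (X.X i) (f.f i).hom
    = LinearMap.trace k _ (rmap X f i)
      + LinearMap.trace k _ (Submodule.mapQ (Zsub X i) (Zsub X i) (f.f i).hom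
          (fun x hx => f_mem_Zsub X f i x hx)) := by
  exact trace_eq_restrict_add_mapQ (Zsub X i) (f.f i).hom (fun x hx => f_mem_Zsub X f i x hx)

/-- step 2: the co-cycles part is the trace on the next boundaries -/
lemma step2 : LinearMap.trace k _ (Submodule.mapQ (Zsub X i) (Zsub X i) (f.f i).hom
      (fun x hx => f_mem_Zsub X f i x hx))
    = LinearMap.trace k _ (bmap X f i (i+1)) := by
  refine trace_eq_of_equiv (K := k)
    ((X.d i (i+1)).hom.quotKerEquivRange) _ _ ?_
  intro x
  obtain ⟨y, rfl⟩ := Submodule.Quotient.mk_surjective _ x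
  apply Subtype.ext
  show (X.d i (i+1)).hom ((f.f i).hom y) = (f.f (i+1)).hom ((X.d i (i+1)).hom y)
  exact hom_congr (f.comm i (i+1)) y

/-- step 3: trace on cycles splits into homology and boundary parts -/
lemma step3 : LinearMap.trace k _ (rmap X f i)
    = LinearMap.trace k _ (hmap X f i)
      + LinearMap.trace k (Nsub X i) ((rmap X f i).restrict
          (fun x hx => rmap_N X f i hx)) := by
  have := trace_eq_restrict_add_mapQ (Nsub X i) (rmap X f i) (rmap_N X f i)
  rw [this]
  exact add_comm _ _

/-- step 4: the boundary part of cycles has the same trace as `bmap` -/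
lemma B_le_Z : LinearMap.range (X.d (i-1) i).hom ≤ Zsub X i := by
  rintro x ⟨y, rfl⟩
  have h0 : X.d (i-1) i ≫ X.d i (i+1) = 0 := X.d_comp_d _ _ _
  show (X.d i (i+1)).hom ((X.d (i-1) i).hom y) = 0
  calc (X.d i (i+1)).hom ((X.d (i-1) i).hom y) = (X.d (i-1) i ≫ X.d i (i+1)).hom y := rfl
    _ = (0 : X.X (i-1) ⟶ X.X (i+1)).hom y := by rw [h0]
    _ = 0 := rfl

lemma N_eq : Nsub X i = (LinearMap.range (X.d (i-1) i).hom).comap (Zsub X i).subtype := by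
  ext z
  constructor
  · rintro ⟨x, rfl⟩; exact ⟨x, rfl⟩
  · rintro ⟨x, hx⟩; exact ⟨x, Subtype.ext hx⟩

lemma step4 : LinearMap.trace k (Nsub X i) ((rmap X f i).restrict
      (fun x hx => rmap_N X f i hx))
    = LinearMap.trace k _ (bmap X f (i-1) i) := by
  refine trace_eq_of_equiv (K := k)
    ((LinearEquiv.ofEq _ _ (N_eq X i)).trans
      (Submodule.comapSubtypeEquivOfLe (B_le_Z X i))) _ _ ?_
  rintro ⟨⟨x, hxZ⟩, hxN⟩
  apply Subtype.ext
  rfl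

lemma trace_zero_of_subsingleton {K : Type} [Field K] {M : Type*} [AddCommGroup M]
    [Module K M] [Subsingleton M] (φ : M →ₗ[K] M) : LinearMap.trace K M φ = 0 := by
  have : φ = 0 := LinearMap.ext fun x => Subsingleton.elim _ _
  rw [this, map_zero]

lemma subsingleton_of_isZero {M : ModuleCat.{v} k} (h : IsZero M) :
    Subsingleton (M : Type v) := by
  constructor
  intro x y
  have h1 : (𝟙 M : M ⟶ M) = 0 := h.eq_of_src _ _
  calc x = (𝟙 M : M ⟶ M) x := rfl
    _ = (0 : M ⟶ M) x := by rw [h1]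
    _ = (𝟙 M : M ⟶ M) y := by rw [h1]; rfl
    _ = y := rfl

lemma subsingleton_range {M N : Type*} [AddCommGroup M] [AddCommGroup N] [Module k M]
    [Module k N] [Subsingleton M] (g : M →ₗ[k] N) :
    Subsingleton (LinearMap.range g) := by
  constructor
  rintro ⟨x, ⟨c, rfl⟩⟩ ⟨y, ⟨d, rfl⟩⟩
  apply Subtype.ext
  rw [Subsingleton.elim c d]

lemma subsingleton_quot {M : Type*} [AddCommGroup M] [Module k M] [Subsingleton M]
    (p : Submodule k M) : Subsingleton (M ⧸ p) :=
  (Submodule.Quotient.mk_surjective p).subsingleton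

end Bridge

open CategoryTheory Limits

/-- Hopf trace formula: for a bounded cochain complex `X` of finite-dimensional vector
spaces over a field `k` and a chain map `f : X ⟶ X`, the alternating sum of the traces of
the components `fⁱ` equals the alternating sum of the traces of the induced maps on
cohomology. -/
theorem hopf_trace_formula (k : Type) [Field k]
    (X : CochainComplex (ModuleCat k) ℤ)
    (hbdd : ∃ a b : ℤ, ∀ i : ℤ, (i < a ∨ b < i) → IsZero (X.X i))
    [hfd : ∀ i : ℤ, FiniteDimensional k (X.X i)]
    (f : X ⟶ X) :
    ∑ᶠ i : ℤ, (Int.negOnePow i : ℤ) • LinearMap.trace k (X.X i) (f.f i).hom =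
      ∑ᶠ i : ℤ, (Int.negOnePow i : ℤ) •
        LinearMap.trace k (X.homology i) (HomologicalComplex.homologyMap f i).hom := by
  obtain ⟨a, b, hz⟩ := hbdd
  have hsub : ∀ i : ℤ, (i < a ∨ b < i) → Subsingleton (X.X i) :=
    fun i h => subsingleton_of_isZero (hz i h)
  set t : ℤ → k := fun i => (Int.negOnePow i : ℤ) • LinearMap.trace k (X.X i) (f.f i).hom with ht
  set H : ℤ → k := fun i => (Int.negOnePow i : ℤ) •
    LinearMap.trace k (X.homology i) (HomologicalComplex.homologyMap f i).hom with hH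
  set u : ℤ → k := fun i => (Int.negOnePow i : ℤ) •
    LinearMap.trace k _ (bmap X f (i-1) i) with hu
  -- pointwise identity
  have hpt : ∀ i : ℤ, t i = H i + (u i - u (i+1)) := by
    intro i
    have e1 := step1 X f i
    have e2 := step2 X f i
    have e3 := step3 X f i
    have e4 := step4 X f i
    have e5 := bridge X f i
    have e6 : LinearMap.trace k (X.X i) (f.f i).hom
        = LinearMap.trace k (X.homology i) (HomologicalComplex.homologyMap f i).hom
          + LinearMap.trace k _ (bmap X f (i-1) i)
          + LinearMap.trace k _ (bmap X f i (i+1)) := by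
      rw [e1, e2, e3, e4, e5]
    have hu1 : u (i+1) = -((Int.negOnePow i : ℤ) • LinearMap.trace k _ (bmap X f i (i+1))) := by
      rw [hu]
      simp only []
      rw [bmap_congr X f (i+1-1) i (i+1) (by ring), Int.negOnePow_succ]
      push_cast
      rw [neg_smul]
    rw [ht, hH]
    simp only []
    rw [e6, smul_add, smul_add, hu1]
    ring
  -- support bounds
  have hts : Function.support t ⊆ (Finset.Icc a b : Set ℤ) := by
    intro i hi
    simp only [Finset.coe_Icc, Set.mem_Icc]
    by_contra hc
    push_neg at hc
    have : Subsingleton (X.X i) := by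
      by_cases h1 : i < a
      · exact hsub i (Or.inl h1)
      · exact hsub i (Or.inr (hc (le_of_not_gt h1)))
    exact hi (by rw [ht]; simp only []; rw [trace_zero_of_subsingleton, smul_zero])
  have hHs : Function.support H ⊆ (Finset.Icc a b : Set ℤ) := by
    intro i hi
    simp only [Finset.coe_Icc, Set.mem_Icc]
    by_contra hc
    push_neg at hc
    have hss : Subsingleton (X.X i) := by
      by_cases h1 : i < a
      · exact hsub i (Or.inl h1)
      · exact hsub i (Or.inr (hc (le_of_not_gt h1)))
    have : Subsingleton (Zsub X i ⧸ Nsub X i) := subsingleton_quot _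
    refine hi ?_
    rw [hH]
    simp only []
    rw [bridge X f i, trace_zero_of_subsingleton, smul_zero]
  have hus : Function.support u ⊆ (Finset.Icc a (b+1) : Set ℤ) := by
    intro i hi
    simp only [Finset.coe_Icc, Set.mem_Icc]
    by_contra hc
    push_neg at hc
    have hss : Subsingleton (LinearMap.range (X.d (i-1) i).hom) := by
      by_cases h1 : i < a
      · have : Subsingleton (X.X (i-1)) := hsub (i-1) (Or.inl (by omega))
        exact subsingleton_range _
      · have : Subsingleton (X.X (i-1)) := hsub (i-1) (Or.inr (by
          have := hc (le_of_not_gt h1); omega))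
        exact subsingleton_range _
    refine hi ?_
    rw [hu]
    simp only []
    rw [trace_zero_of_subsingleton, smul_zero]
  have htf : (Function.support t).Finite := Set.Finite.subset (Finset.Icc a b).finite_toSet hts
  have hHf : (Function.support H).Finite := Set.Finite.subset (Finset.Icc a b).finite_toSet hHs
  have huf : (Function.support u).Finite := Set.Finite.subset (Finset.Icc a (b+1)).finite_toSet hus
  have hushift : (Function.support (fun i => u (i+1))).Finite := by
    apply Set.Finite.subset ((Finset.Icc (a-1) b).finite_toSet)
    intro i hi
    have : u (i+1) ≠ 0 := hi
    have h2 : (i+1) ∈ Function.support u := this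
    have := hus h2
    simp only [Finset.coe_Icc, Set.mem_Icc] at this ⊢
    omega
  have hvf : (Function.support (fun i => u i - u (i+1))).Finite := by
    apply Set.Finite.subset (huf.union hushift)
    intro i hi
    by_contra hc
    simp only [Set.mem_union, Function.mem_support, not_or, not_not] at hc
    exact hi (by simp only [hc.1, hc.2, sub_zero])
  calc ∑ᶠ i : ℤ, t i = ∑ᶠ i : ℤ, (H i + (u i - u (i+1))) := by
        exact finsum_congr hpt
    _ = (∑ᶠ i : ℤ, H i) + ∑ᶠ i : ℤ, (u i - u (i+1)) := finsum_add_distrib hHf hvf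
    _ = (∑ᶠ i : ℤ, H i) + ((∑ᶠ i : ℤ, u i) - ∑ᶠ i : ℤ, u (i+1)) := by
        rw [finsum_sub_distrib huf hushift]
    _ = ∑ᶠ i : ℤ, H i := by
        have : ∑ᶠ i : ℤ, u (i+1) = ∑ᶠ i : ℤ, u i := by
          exact finsum_comp_equiv (Equiv.addRight (1 : ℤ))
        rw [this, sub_self, add_zero]
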